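/- For every base B, all formulas φ, ψ, χ, and each sign * ∈ {+,−}: if ⊩−_B φ∧ψ, ∅;φ ⊩*_B χ and ∅;ψ ⊩*_B χ, then ⊩*_B χ. -/

import Mathlib

/-- Signs: `pos` for proof/assertion, `neg` for refutation/rejection. -/
inductive Sign where
  | pos
  | neg
deriving DecidableEq

/-- The dual of a sign. -/
def Sign.dual : Sign → Sign
  | .pos => .neg
  | .neg => .pos

/-- Formulas of the bilateral logic 2Int. -/
inductive Form where
  | atom : ℕ → Form
  | bot : Form
  | top : Form
  | and : Form → Form → Form
  | or : Form → Form → Form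
  | imp : Form → Form → Form
  | coimp : Form → Form → Form
deriving DecidableEq

/-- A premise of an atomic rule: the sign required (proof or refutation), the premise atom,
and the sets of dischargeable atomic proof assumptions and refutation assumptions. -/
structure Premise where
  sign : Sign
  concl : ℕ
  dischargePf : Set ℕ
  dischargeRf : Set ℕ

/-- An atomic rule: a list of premises, a marking as proof (`pos`) or refutation (`neg`) rule,
and an atomic conclusion. -/
structure AtomicRule where
  prems : List Premise
  sign : Sign
  concl : ℕ

/-- A bilateral atomic system (base) is a set of atomic rules. -/
abbrev Base := Set AtomicRule

/-- `AtDeriv B s Γ Δ p` formalizes `Γ;Δ ⊢^s_B p`: there is a deduction in `B` of the atom `p`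
whose open atomic proof assumptions are contained in `Γ` and open atomic refutation
assumptions in `Δ`, consisting of a single assumption of sign `s` or ending with a rule of
sign `s`. -/
inductive AtDeriv (B : Base) : Sign → Set ℕ → Set ℕ → ℕ → Prop
  | hypPos {Γ Δ : Set ℕ} {p : ℕ} : p ∈ Γ → AtDeriv B .pos Γ Δ p
  | hypNeg {Γ Δ : Set ℕ} {p : ℕ} : p ∈ Δ → AtDeriv B .neg Γ Δ p
  | app {Γ Δ : Set ℕ} {R : AtomicRule} (hR : R ∈ B)
      (h : ∀ pr ∈ R.prems,
        AtDeriv B pr.sign (Γ ∪ pr.dischargePf) (Δ ∪ pr.dischargeRf) pr.concl) :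
      AtDeriv B R.sign Γ Δ R.concl

/-- Bilateral validity (support) `⊩^s_B φ`, by recursion on the formula. -/
def Supp : Form → Base → Sign → Prop
  | .atom p, B, s => AtDeriv B s ∅ ∅ p
  | .bot, B, .pos => ∀ p : ℕ, AtDeriv B .pos ∅ ∅ p ∧ AtDeriv B .neg ∅ ∅ p
  | .bot, _, .neg => True
  | .top, _, .pos => True
  | .top, B, .neg => ∀ p : ℕ, AtDeriv B .pos ∅ ∅ p ∧ AtDeriv B .neg ∅ ∅ p
  | .and φ ψ, B, .pos => Supp φ B .pos ∧ Supp ψ B .pos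
  | .and φ ψ, B, .neg => ∀ C : Base, B ⊆ C → ∀ p : ℕ,
      (((∀ D : Base, C ⊆ D → Supp φ D .neg → AtDeriv D .pos ∅ ∅ p) ∧
        (∀ D : Base, C ⊆ D → Supp ψ D .neg → AtDeriv D .pos ∅ ∅ p)) →
        AtDeriv C .pos ∅ ∅ p) ∧
      (((∀ D : Base, C ⊆ D → Supp φ D .neg → AtDeriv D .neg ∅ ∅ p) ∧
        (∀ D : Base, C ⊆ D → Supp ψ D .neg → AtDeriv D .neg ∅ ∅ p)) →
        AtDeriv C .neg ∅ ∅ p)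
  | .or φ ψ, B, .pos => ∀ C : Base, B ⊆ C → ∀ p : ℕ,
      (((∀ D : Base, C ⊆ D → Supp φ D .pos → AtDeriv D .pos ∅ ∅ p) ∧
        (∀ D : Base, C ⊆ D → Supp ψ D .pos → AtDeriv D .pos ∅ ∅ p)) →
        AtDeriv C .pos ∅ ∅ p) ∧
      (((∀ D : Base, C ⊆ D → Supp φ D .pos → AtDeriv D .neg ∅ ∅ p) ∧
        (∀ D : Base, C ⊆ D → Supp ψ D .pos → AtDeriv D .neg ∅ ∅ p)) →
        AtDeriv C .neg ∅ ∅ p)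
  | .or φ ψ, B, .neg => Supp φ B .neg ∧ Supp ψ B .neg
  | .imp φ ψ, B, .pos => ∀ C : Base, B ⊆ C → Supp φ C .pos → Supp ψ C .pos
  | .imp φ ψ, B, .neg => Supp φ B .pos ∧ Supp ψ B .neg
  | .coimp φ ψ, B, .pos => Supp φ B .pos ∧ Supp ψ B .neg
  | .coimp φ ψ, B, .neg => ∀ C : Base, B ⊆ C → Supp ψ C .neg → Supp φ C .neg

open Classical in
/-- `Cons B Γ Δ s χ` formalizes `Γ;Δ ⊩^s_B χ`. -/
def Cons (B : Base) (Γ Δ : Set Form) (s : Sign) (χ : Form) : Prop :=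
  if Γ = ∅ ∧ Δ = ∅ then Supp χ B s
  else ∀ C : Base, B ⊆ C →
    (∀ φ ∈ Γ, Supp φ C .pos) → (∀ ψ ∈ Δ, Supp ψ C .neg) → Supp χ C s

/-!
The refutation clause for `φ ∧ ψ` is an elimination rule restricted to atoms: an atom that holds,
with either sign, in every extension refuting `φ` and in every extension refuting `ψ` already
holds. Induction on `χ` lifts this to every formula. Clauses that are componentwise follow from the
induction hypotheses; the clauses quantifying over extensions (`→⁺`, `↤⁻`, and `∧⁻`, `∨⁺`, which
have the same atomic elimination form) follow because support and this elimination property are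
both monotone under extension of the base.
-/

theorem AtDeriv.mono {B C : Base} (hBC : B ⊆ C) {s : Sign} {Γ Δ : Set ℕ} {p : ℕ}
    (h : AtDeriv B s Γ Δ p) : AtDeriv C s Γ Δ p := by
  induction h with
  | hypPos hp => exact .hypPos hp
  | hypNeg hp => exact .hypNeg hp
  | app hR _ ih => exact .app (hBC hR) ih

theorem Supp.mono {B C : Base} (hBC : B ⊆ C) {χ : Form} {s : Sign} (h : Supp χ B s) :
    Supp χ C s := by
  induction χ generalizing B C s with
  | atom p => exact AtDeriv.mono hBC h
  | bot | top =>
    cases s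
    all_goals first
      | trivial
      | exact fun p => ⟨(h p).1.mono hBC, (h p).2.mono hBC⟩
  | and _ _ ih₁ ih₂ | or _ _ ih₁ ih₂ | imp _ _ ih₁ ih₂ | coimp _ _ ih₁ ih₂ =>
    cases s
    all_goals first
      | exact ⟨ih₁ hBC h.1, ih₂ hBC h.2⟩
      | exact fun D hD => h D (hBC.trans hD)

/-- `B` supports "`P` or `Q`" as far as atoms can tell: the common shape of the clauses for
`⊩⁻ φ ∧ ψ` and `⊩⁺ φ ∨ ψ`. -/
def AtomicDisj (P Q : Base → Prop) (B : Base) : Prop :=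
  ∀ C : Base, B ⊆ C → ∀ (s : Sign) (p : ℕ),
    (∀ D : Base, C ⊆ D → P D → AtDeriv D s ∅ ∅ p) →
    (∀ D : Base, C ⊆ D → Q D → AtDeriv D s ∅ ∅ p) → AtDeriv C s ∅ ∅ p

namespace AtomicDisj

variable {P Q : Base → Prop} {B : Base}

theorem mono {C : Base} (hBC : B ⊆ C) (h : AtomicDisj P Q B) : AtomicDisj P Q C :=
  fun D hD => h D (hBC.trans hD)

theorem of_atomicDisj {P' Q' : Base → Prop} (h : AtomicDisj P Q B)
    (hP : ∀ C, B ⊆ C → P C → AtomicDisj P' Q' C) (hQ : ∀ C, B ⊆ C → Q C → AtomicDisj P' Q' C) :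
    AtomicDisj P' Q' B := by
  intro C hC s p hP' hQ'
  refine h C hC s p (fun D hD hD' => ?_) (fun D hD hD' => ?_)
  · exact hP D (hC.trans hD) hD' D subset_rfl s p
      (fun E hE => hP' E (hD.trans hE)) (fun E hE => hQ' E (hD.trans hE))
  · exact hQ D (hC.trans hD) hD' D subset_rfl s p
      (fun E hE => hP' E (hD.trans hE)) (fun E hE => hQ' E (hD.trans hE))

theorem forall_atDeriv (h : AtomicDisj P Q B)
    (hP : ∀ C, B ⊆ C → P C → ∀ p, AtDeriv C .pos ∅ ∅ p ∧ AtDeriv C .neg ∅ ∅ p)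
    (hQ : ∀ C, B ⊆ C → Q C → ∀ p, AtDeriv C .pos ∅ ∅ p ∧ AtDeriv C .neg ∅ ∅ p) (p : ℕ) :
    AtDeriv B .pos ∅ ∅ p ∧ AtDeriv B .neg ∅ ∅ p :=
  ⟨h B subset_rfl .pos p (fun C hC hC' => (hP C hC hC' p).1) (fun C hC hC' => (hQ C hC hC' p).1),
    h B subset_rfl .neg p (fun C hC hC' => (hP C hC hC' p).2) (fun C hC hC' => (hQ C hC hC' p).2)⟩

end AtomicDisj

theorem atomicDisj_iff {P Q : Base → Prop} {B : Base} :
    AtomicDisj P Q B ↔ ∀ C : Base, B ⊆ C → ∀ p : ℕ,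
      (((∀ D : Base, C ⊆ D → P D → AtDeriv D .pos ∅ ∅ p) ∧
        (∀ D : Base, C ⊆ D → Q D → AtDeriv D .pos ∅ ∅ p)) → AtDeriv C .pos ∅ ∅ p) ∧
      (((∀ D : Base, C ⊆ D → P D → AtDeriv D .neg ∅ ∅ p) ∧
        (∀ D : Base, C ⊆ D → Q D → AtDeriv D .neg ∅ ∅ p)) → AtDeriv C .neg ∅ ∅ p) := by
  refine ⟨fun h C hC p => ⟨?_, ?_⟩, fun h C hC s p hP hQ => ?_⟩
  · exact fun hPQ => h C hC .pos p hPQ.1 hPQ.2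
  · exact fun hPQ => h C hC .neg p hPQ.1 hPQ.2
  · cases s
    exacts [(h C hC p).1 ⟨hP, hQ⟩, (h C hC p).2 ⟨hP, hQ⟩]

theorem supp_and_neg_iff {φ ψ : Form} {B : Base} :
    Supp (φ.and ψ) B .neg ↔ AtomicDisj (Supp φ · .neg) (Supp ψ · .neg) B :=
  atomicDisj_iff.symm

theorem supp_or_pos_iff {φ ψ : Form} {B : Base} :
    Supp (φ.or ψ) B .pos ↔ AtomicDisj (Supp φ · .pos) (Supp ψ · .pos) B :=
  atomicDisj_iff.symm

theorem Supp.of_atomicDisj {P Q : Base → Prop} {B : Base} {χ : Form} {s : Sign}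
    (h : AtomicDisj P Q B) (hP : ∀ C, B ⊆ C → P C → Supp χ C s)
    (hQ : ∀ C, B ⊆ C → Q C → Supp χ C s) : Supp χ B s := by
  induction χ generalizing B s with
  | atom p => exact h B subset_rfl s p hP hQ
  | bot | top =>
    cases s
    all_goals first
      | trivial
      | exact h.forall_atDeriv hP hQ
  | and χ₁ χ₂ ih₁ ih₂ | or χ₁ χ₂ ih₁ ih₂ | imp χ₁ χ₂ ih₁ ih₂ | coimp χ₁ χ₂ ih₁ ih₂ =>
    -- alternatives, in order: componentwise clauses, `∧⁻`, `∨⁺`, `→⁺`, `↤⁻`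
    cases s
    all_goals first
      | exact ⟨ih₁ h (fun C hC hC' => (hP C hC hC').1) (fun C hC hC' => (hQ C hC hC').1),
          ih₂ h (fun C hC hC' => (hP C hC hC').2) (fun C hC hC' => (hQ C hC hC').2)⟩
      | exact supp_and_neg_iff.mpr <| h.of_atomicDisj
          (fun C hC hC' => supp_and_neg_iff.mp (hP C hC hC'))
          (fun C hC hC' => supp_and_neg_iff.mp (hQ C hC hC'))
      | exact supp_or_pos_iff.mpr <| h.of_atomicDisj
          (fun C hC hC' => supp_or_pos_iff.mp (hP C hC hC'))
          (fun C hC hC' => supp_or_pos_iff.mp (hQ C hC hC'))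
      | exact fun C hC hχ => ih₂ (h.mono hC)
          (fun D hD hD' => hP D (hC.trans hD) hD' D subset_rfl (hχ.mono hD))
          (fun D hD hD' => hQ D (hC.trans hD) hD' D subset_rfl (hχ.mono hD))
      | exact fun C hC hχ => ih₁ (h.mono hC)
          (fun D hD hD' => hP D (hC.trans hD) hD' D subset_rfl (hχ.mono hD))
          (fun D hD hD' => hQ D (hC.trans hD) hD' D subset_rfl (hχ.mono hD))

theorem cons_empty_singleton_iff {B : Base} {φ χ : Form} {s : Sign} :
    Cons B ∅ {φ} s χ ↔ ∀ C, B ⊆ C → Supp φ C .neg → Supp χ C s := by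
  simp [Cons]

theorem conjunction_general (B : Base) (φ ψ χ : Form) (s : Sign)
    (hand : Supp (φ.and ψ) B .neg)
    (h1 : Cons B ∅ {φ} s χ) (h2 : Cons B ∅ {ψ} s χ) :
    Supp χ B s :=
  Supp.of_atomicDisj (supp_and_neg_iff.mp hand) (cons_empty_singleton_iff.mp h1)
    (cons_empty_singleton_iff.mp h2)
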